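/- Every monomial r^γ s^δ appearing with nonzero coefficient in a_m satisfies γ + δ ≡ m (mod 2); every monomial in b_m satisfies γ + δ ≡ m + 1 (mod 2); and every monomial in c_m satisfies γ + δ ≡ m (mod 2), where a_m, b_m, c_m are defined by a_2 = 1, b_2 = s − s^{−1}, c_2 = −r^{−1}(s − s^{−1}), a_{m+1} = b_m, b_{m+1} = a_m + (s−s^{−1})b_m, c_{m+1} = r^{−1}(c_m − (s−s^{−1})b_m). -/

import Mathlib

/-- The ring of Laurent polynomials `ℤ[r, r^{−1}, s, s^{−1}]`, realized as the group
algebra of `ℤ × ℤ` over `ℤ`; the monomial `r^γ s^δ` corresponds to `single (γ, δ) 1`. -/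
abbrev LaurentZ : Type := AddMonoidAlgebra ℤ (ℤ × ℤ)

/-- The variable `r`. -/
noncomputable def rL : LaurentZ := AddMonoidAlgebra.single (1, 0) 1

/-- `r^{−1}`. -/
noncomputable def rLinv : LaurentZ := AddMonoidAlgebra.single (-1, 0) 1

/-- The variable `s`. -/
noncomputable def sL : LaurentZ := AddMonoidAlgebra.single (0, 1) 1

/-- `s^{−1}`. -/
noncomputable def sLinv : LaurentZ := AddMonoidAlgebra.single (0, -1) 1

/-- Auxiliary: `(a_{m+2}, b_{m+2}, c_{m+2})` for the BWM power recursion,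
with `a_2 = 1`, `b_2 = s − s^{−1}`, `c_2 = −r^{−1}(s − s^{−1})`,
`a_{m+1} = b_m`, `b_{m+1} = a_m + (s−s^{−1})b_m`, `c_{m+1} = r^{−1}(c_m − (s−s^{−1})b_m)`. -/
noncomputable def abcL : ℕ → LaurentZ × LaurentZ × LaurentZ
  | 0 => (1, sL - sLinv, -(rLinv * (sL - sLinv)))
  | n + 1 =>
    let p := abcL n
    (p.2.1, p.1 + (sL - sLinv) * p.2.1, rLinv * (p.2.2 - (sL - sLinv) * p.2.1))

/-- `a_m` for `m ≥ 2`. -/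
noncomputable def aL (m : ℕ) : LaurentZ := (abcL (m - 2)).1

/-- `b_m` for `m ≥ 2`. -/
noncomputable def bL (m : ℕ) : LaurentZ := (abcL (m - 2)).2.1

/-- `c_m` for `m ≥ 2`. -/
noncomputable def cL (m : ℕ) : LaurentZ := (abcL (m - 2)).2.2

/-!
Grading a monomial `r^γ s^δ` by `γ + δ` mod 2 makes `ℤ[r^±1, s^±1]` a `ZMod 2`-graded ring.
Both `r⁻¹` and `s - s⁻¹` are homogeneous of odd degree, so the recursion keeps `a_m` and `c_m`
homogeneous of degree `m` and `b_m` homogeneous of degree `m + 1`.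
-/

open AddMonoidAlgebra

def totalDegreeParity : ℤ × ℤ →+ ZMod 2 :=
  (Int.castAddHom (ZMod 2)).comp (AddMonoidHom.fst ℤ ℤ + AddMonoidHom.snd ℤ ℤ)

abbrev parityGrade (i : ZMod 2) : Submodule ℤ LaurentZ :=
  gradeBy ℤ totalDegreeParity i

instance : SetLike.GradedMonoid parityGrade := gradeBy.gradedMonoid totalDegreeParity

theorem parity_of_mem_parityGrade {f : LaurentZ} {k γ δ : ℤ} (hf : f ∈ parityGrade k)
    (hγδ : f.coeff (γ, δ) ≠ 0) : (γ + δ) % 2 = k % 2 := by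
  have h := hf (γ, δ) (Finsupp.mem_support_iff.mpr hγδ)
  simp only [totalDegreeParity, AddMonoidHom.coe_comp, Function.comp_apply,
    AddMonoidHom.add_apply, AddMonoidHom.coe_fst, AddMonoidHom.coe_snd] at h
  exact (ZMod.intCast_eq_intCast_iff' _ _ 2).mp (by exact_mod_cast h)

theorem mul_mem_parityGrade_succ {x y : LaurentZ} {i : ZMod 2} (hx : x ∈ parityGrade 1)
    (hy : y ∈ parityGrade i) : x * y ∈ parityGrade (i + 1) :=
  add_comm 1 i ▸ SetLike.mul_mem_graded hx hy

theorem mul_mem_parityGrade_of_succ {x y : LaurentZ} {i : ZMod 2} (hx : x ∈ parityGrade 1)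
    (hy : y ∈ parityGrade (i + 1)) : x * y ∈ parityGrade i := by
  simpa only [CharTwo.add_cancel_right] using mul_mem_parityGrade_succ hx hy

theorem rLinv_mem_parityGrade : rLinv ∈ parityGrade 1 :=
  single_mem_gradeBy _ (-1, 0) 1

theorem sL_sub_sLinv_mem_parityGrade : sL - sLinv ∈ parityGrade 1 :=
  sub_mem (single_mem_gradeBy _ (0, 1) 1) (single_mem_gradeBy _ (0, -1) 1)

theorem abcL_mem_parityGrade (n : ℕ) :
    (abcL n).1 ∈ parityGrade n ∧ (abcL n).2.1 ∈ parityGrade (n + 1) ∧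
      (abcL n).2.2 ∈ parityGrade n := by
  induction n with
  | zero =>
    refine ⟨SetLike.one_mem_graded parityGrade,
      by simpa [abcL] using sL_sub_sLinv_mem_parityGrade, ?_⟩
    exact neg_mem (mul_mem_parityGrade_of_succ rLinv_mem_parityGrade
      (by simpa using sL_sub_sLinv_mem_parityGrade))
  | succ n ih =>
    obtain ⟨ha, hb, hc⟩ := ih
    have htb := mul_mem_parityGrade_of_succ sL_sub_sLinv_mem_parityGrade hb
    push_cast
    rw [CharTwo.add_cancel_right]
    exact ⟨hb, add_mem ha htb, mul_mem_parityGrade_succ rLinv_mem_parityGrade (sub_mem hc htb)⟩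

/-- Every monomial `r^γ s^δ` occurring in `a_m` has `γ + δ ≡ m (mod 2)`; every monomial
in `b_m` has `γ + δ ≡ m + 1 (mod 2)`; every monomial in `c_m` has `γ + δ ≡ m (mod 2)`. -/
theorem abc_monomial_parity (m : ℕ) (hm : 2 ≤ m) :
    (∀ γ δ : ℤ, (aL m).coeff (γ, δ) ≠ 0 → (γ + δ) % 2 = (m : ℤ) % 2) ∧
    (∀ γ δ : ℤ, (bL m).coeff (γ, δ) ≠ 0 → (γ + δ) % 2 = ((m : ℤ) + 1) % 2) ∧
    (∀ γ δ : ℤ, (cL m).coeff (γ, δ) ≠ 0 → (γ + δ) % 2 = (m : ℤ) % 2) := by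
  obtain ⟨n, rfl⟩ : ∃ n, m = n + 2 := ⟨m - 2, by omega⟩
  have hshift : ((n + 2 : ℕ) : ZMod 2) = n := by simp [CharTwo.two_eq_zero]
  obtain ⟨ha, hb, hc⟩ := abcL_mem_parityGrade n
  rw [← hshift] at ha hb hc
  refine ⟨fun γ δ h => parity_of_mem_parityGrade (k := (n + 2 : ℕ)) ?_ h,
    fun γ δ h => parity_of_mem_parityGrade (k := (n + 2 : ℕ) + 1) ?_ h,
    fun γ δ h => parity_of_mem_parityGrade (k := (n + 2 : ℕ)) ?_ h⟩
  · simpa [aL] using ha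
  · simpa [bL] using hb
  · simpa [cL] using hc
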